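/- Let $a < b$ be real numbers, let $n_1, n_2 > 0$, let $g : [a,b] \to \mathbb{R}$ be continuous, and set $f := J_a^{n_1+n_2} g$. Then with $m_2 := \lceil n_2 \rceil$ and $M := \lceil n_1+n_2 \rceil$: the function $J_a^{m_2-n_2} f$ is $m_2$-times differentiable on $[a,b]$ with $m_2$-th derivative equal to $J_a^{n_1} g$ everywhere (so $D_a^{n_2} f = J_a^{n_1} g$), the fractional derivatives $D_a^{n_1}(D_a^{n_2} f)$ and $D_a^{n_1+n_2} f$ exist classically everywhere on $[a,b]$, and $D_a^{n_1}(D_a^{n_2} f)(x) = D_a^{n_1+n_2} f(x) = g(x)$ for all $x \in [a,b]$. (This is the paper's composition theorem for Riemann–Liouville fractional derivatives applied to elements of the range of $\mathcal{J}_a^{n_1+n_2}$, stated for continuous $g$.) -/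

import Mathlib

open MeasureTheory Set

/-- The Riemann–Liouville fractional integral of order `n` based at `a`,
with `J_a^0` the identity operator. -/
noncomputable def rlInt (a n : ℝ) (h : ℝ → ℝ) : ℝ → ℝ :=
  if n = 0 then h else fun x => (1 / Real.Gamma n) * ∫ t in a..x, (x - t) ^ (n - 1) * h t

/-!
Extend `g` continuously off `[a, b]`; then only two facts about `J_a` on continuous functions are
needed. The semigroup law `J^c J^d = J^(c+d)` comes from Fubini on the triangle `a < s ≤ t ≤ x`
and the Beta integral `∫_s^x (x-t)^(c-1) (t-s)^(d-1) dt = B(c, d) (x-s)^(c+d-1)`. Since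
`J^(c+1) = J^1 J^c` and `J^c g` is continuous, the fundamental theorem of calculus gives
`(J^(c+1) g)' = J^c g`. Hence, with `m = ⌈n⌉`, `J^(m-n) J^(n+c) g = J^(c+m) g` has `m`-th
derivative `J^c g`, and both sides of the composition law reduce to this.
-/

open scoped Interval

lemma integral_rpow_mul_sub_rpow {c d L : ℝ} (hc : 0 < c) (hd : 0 < d) (hL : 0 < L) :
    ∫ u in (0 : ℝ)..L, u ^ (d - 1) * (L - u) ^ (c - 1) =
      Real.Gamma c * Real.Gamma d / Real.Gamma (c + d) * L ^ (c + d - 1) := by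
  apply Complex.ofReal_injective
  have hscaled := Complex.betaIntegral_scaled d c hL
  rw [Complex.betaIntegral_eq_Gamma_mul_div _ _ (by simpa) (by simpa)] at hscaled
  rw [← intervalIntegral.integral_ofReal]
  have hcast : ∀ u ∈ uIcc 0 L, (((u ^ (d - 1) * (L - u) ^ (c - 1) : ℝ)) : ℂ) =
      (u : ℂ) ^ ((d : ℂ) - 1) * ((L : ℂ) - u) ^ ((c : ℂ) - 1) := by
    intro u hu
    rw [uIcc_of_le hL.le] at hu
    push_cast [Complex.ofReal_mul, Complex.ofReal_cpow hu.1,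
      Complex.ofReal_cpow (sub_nonneg.2 hu.2)]
    rfl
  rw [intervalIntegral.integral_congr hcast, hscaled]
  push_cast [Complex.ofReal_cpow hL.le, ← Complex.Gamma_ofReal]
  rw [add_comm (d : ℂ)]
  ring

lemma integral_sub_rpow_mul_sub_rpow {c d s x : ℝ} (hc : 0 < c) (hd : 0 < d) (hsx : s < x) :
    ∫ t in s..x, (x - t) ^ (c - 1) * (t - s) ^ (d - 1) =
      Real.Gamma c * Real.Gamma d / Real.Gamma (c + d) * (x - s) ^ (c + d - 1) := by
  rw [← integral_rpow_mul_sub_rpow hc hd (sub_pos.2 hsx), ← sub_self s,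
    ← intervalIntegral.integral_comp_sub_right]
  refine intervalIntegral.integral_congr fun t _ => ?_
  simp only [sub_sub_sub_cancel_right]
  ring

lemma intervalIntegrable_sub_rpow {c : ℝ} (hc : 0 < c) (a x : ℝ) :
    IntervalIntegrable (fun t => (x - t) ^ (c - 1)) volume a x := by
  simpa using (intervalIntegral.intervalIntegrable_rpow' (a := x - a) (b := x - x) (r := c - 1)
    (by linarith)).comp_sub_left x

@[simp] lemma rlInt_zero (a : ℝ) (h : ℝ → ℝ) : rlInt a 0 h = h := by simp [rlInt]

lemma rlInt_of_ne_zero {c : ℝ} (hc : c ≠ 0) (a : ℝ) (h : ℝ → ℝ) (x : ℝ) :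
    rlInt a c h x = (1 / Real.Gamma c) * ∫ t in a..x, (x - t) ^ (c - 1) * h t := by
  simp [rlInt, hc]

lemma rlInt_one (a : ℝ) (h : ℝ → ℝ) (x : ℝ) : rlInt a 1 h x = ∫ t in a..x, h t := by
  simp [rlInt_of_ne_zero one_ne_zero]

lemma rlInt_congr {a b c : ℝ} {h₁ h₂ : ℝ → ℝ} (h : EqOn h₁ h₂ (Icc a b)) :
    EqOn (rlInt a c h₁) (rlInt a c h₂) (Icc a b) := by
  rcases eq_or_ne c 0 with rfl | hc
  · simpa using h
  intro x hx
  rw [rlInt_of_ne_zero hc, rlInt_of_ne_zero hc]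
  congr 1
  refine intervalIntegral.integral_congr fun t ht => ?_
  rw [uIcc_of_le hx.1] at ht
  simp only [h ⟨ht.1, ht.2.trans hx.2⟩]

-- The substitution `t = (x - a) u + a` fixes the domain of integration, so that continuity in `x`
-- follows by dominated convergence.
lemma rlInt_eq_integral_unitInterval {a c x : ℝ} (hc : c ≠ 0) (hax : a ≤ x) (h : ℝ → ℝ) :
    rlInt a c h x =
      (x - a) ^ c / Real.Gamma c *
        ∫ u in (0 : ℝ)..1, (1 - u) ^ (c - 1) * h ((x - a) * u + a) := by
  rw [rlInt_of_ne_zero hc]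
  have hsub := intervalIntegral.smul_integral_comp_mul_add (a := 0) (b := 1)
    (fun t : ℝ => (x - t) ^ (c - 1) * h t) (x - a) a
  simp only [mul_zero, zero_add, mul_one, sub_add_cancel, smul_eq_mul] at hsub
  rw [← hsub, ← intervalIntegral.integral_const_mul, ← intervalIntegral.integral_const_mul,
    ← intervalIntegral.integral_const_mul]
  refine intervalIntegral.integral_congr fun u hu => ?_
  rw [uIcc_of_le zero_le_one] at hu
  have hxu : x - ((x - a) * u + a) = (x - a) * (1 - u) := by ring
  rw [hxu, Real.mul_rpow (sub_nonneg.2 hax) (sub_nonneg.2 hu.2),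
    show c = (c - 1) + 1 by ring, Real.rpow_add' (sub_nonneg.2 hax) (by simpa using hc)]
  simp only [add_sub_cancel_right, Real.rpow_one]
  ring

lemma continuousOn_rlInt {a b c : ℝ} (hc : 0 ≤ c) {g : ℝ → ℝ} (hg : Continuous g) :
    ContinuousOn (rlInt a c g) (Icc a b) := by
  rcases hc.eq_or_lt with rfl | hc
  · simpa using hg.continuousOn
  refine ContinuousOn.congr ?_ fun x hx => rlInt_eq_integral_unitInterval hc.ne' hx.1 g
  refine ((Real.continuous_rpow_const hc.le).comp (continuous_sub_right a)).continuousOn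
    |>.div_const _ |>.mul fun x₀ _ => ?_
  obtain ⟨C, hC⟩ := isCompact_Icc.exists_bound_of_continuousOn (hg.continuousOn (s := Icc a b))
  refine intervalIntegral.continuousWithinAt_of_dominated_interval
    (bound := fun u => (1 - u) ^ (c - 1) * C)
    (Filter.Eventually.of_forall fun x => Measurable.aestronglyMeasurable (by fun_prop)) ?_
    ((intervalIntegrable_sub_rpow hc 0 1).mul_const C) (ae_of_all _ fun u _ => by fun_prop)
  filter_upwards [self_mem_nhdsWithin] with x hx
  refine ae_of_all _ fun u hu => ?_
  rw [uIoc_of_le zero_le_one] at hu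
  rw [norm_mul, Real.norm_of_nonneg (Real.rpow_nonneg (sub_nonneg.2 hu.2) _)]
  have hmem : (x - a) * u + a ∈ Icc a b :=
    ⟨by nlinarith [hu.1, hx.1], by nlinarith [hu.2, hx.1, hx.2]⟩
  exact mul_le_mul_of_nonneg_left (hC _ hmem) (Real.rpow_nonneg (sub_nonneg.2 hu.2) _)

namespace RiemannLiouville

def triangle (a x : ℝ) : Set (ℝ × ℝ) := {p | a < p.2 ∧ p.2 ≤ p.1 ∧ p.1 ≤ x}

lemma measurableSet_triangle (a x : ℝ) : MeasurableSet (triangle a x) :=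
  (measurableSet_lt measurable_const measurable_snd).inter
    ((measurableSet_le measurable_snd measurable_fst).inter
      (measurableSet_le measurable_fst measurable_const))

lemma indicator_triangle_apply_left {M : Type*} [Zero M] {a x : ℝ} (F : ℝ × ℝ → M) (t s : ℝ) :
    (triangle a x).indicator F (t, s) =
      (Ioc a x).indicator (fun t => (Ioc a t).indicator (fun s => F (t, s)) s) t := by
  simp only [indicator_apply, triangle, mem_ofPred_eq, mem_Ioc]
  grind

lemma indicator_triangle_apply_right {M : Type*} [Zero M] {a x : ℝ} (F : ℝ × ℝ → M) (t s : ℝ) :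
    (triangle a x).indicator F (t, s) =
      (Ioc a x).indicator (fun s => (Icc s x).indicator (fun t => F (t, s)) t) s := by
  simp only [indicator_apply, triangle, mem_ofPred_eq, mem_Ioc, mem_Icc]
  grind

section

variable {E : Type*} [NormedAddCommGroup E] [NormedSpace ℝ E]

lemma integral_indicator_triangle_left {a x : ℝ} (F : ℝ × ℝ → E) (t : ℝ) :
    ∫ s, (triangle a x).indicator F (t, s) =
      (Ioc a x).indicator (fun t => ∫ s in a..t, F (t, s)) t := by
  simp_rw [indicator_triangle_apply_left]
  by_cases ht : t ∈ Ioc a x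
  · simp [ht, intervalIntegral.integral_of_le ht.1.le, integral_indicator measurableSet_Ioc]
  · simp [ht]

lemma integral_indicator_triangle_right {a x : ℝ} (F : ℝ × ℝ → E) (s : ℝ) :
    ∫ t, (triangle a x).indicator F (t, s) =
      (Ioc a x).indicator (fun s => ∫ t in s..x, F (t, s)) s := by
  simp_rw [indicator_triangle_apply_right]
  by_cases hs : s ∈ Ioc a x
  · simp [hs, intervalIntegral.integral_of_le hs.2, integral_indicator measurableSet_Icc,
      integral_Icc_eq_integral_Ioc]
  · simp [hs]

lemma integral_triangle_eq_iterated {a x : ℝ} (hax : a ≤ x) {F : ℝ × ℝ → E}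
    (hF : IntegrableOn F (triangle a x)) :
    ∫ t in a..x, ∫ s in a..t, F (t, s) = ∫ s in a..x, ∫ t in s..x, F (t, s) := by
  rw [← integrable_indicator_iff (measurableSet_triangle a x), Measure.volume_eq_prod] at hF
  rw [intervalIntegral.integral_of_le hax, intervalIntegral.integral_of_le hax,
    ← integral_indicator measurableSet_Ioc, ← integral_indicator measurableSet_Ioc]
  simp_rw [← integral_indicator_triangle_left, ← integral_indicator_triangle_right]
  rw [← integral_prod _ hF, integral_prod_symm _ hF]

end

end RiemannLiouville

open RiemannLiouville

lemma integrableOn_triangle_kernel {a c d x : ℝ} (hc : 0 < c) (hd : 0 < d) (hax : a ≤ x)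
    {g : ℝ → ℝ} (hg : Continuous g) :
    IntegrableOn (fun p : ℝ × ℝ => (x - p.1) ^ (c - 1) * ((p.1 - p.2) ^ (d - 1) * g p.2))
      (triangle a x) := by
  set F : ℝ × ℝ → ℝ := fun p => (x - p.1) ^ (c - 1) * ((p.1 - p.2) ^ (d - 1) * g p.2)
  have hFm : Measurable F := by fun_prop
  rw [← integrable_indicator_iff (measurableSet_triangle a x), Measure.volume_eq_prod,
    integrable_prod_iff ((hFm.indicator (measurableSet_triangle a x)).aestronglyMeasurable)]
  constructor
  · refine ae_of_all _ fun t => ?_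
    simp_rw [indicator_triangle_apply_left]
    by_cases ht : t ∈ Ioc a x
    · simp only [indicator_of_mem ht]
      rw [integrable_indicator_iff measurableSet_Ioc,
        ← intervalIntegrable_iff_integrableOn_Ioc_of_le ht.1.le]
      exact ((intervalIntegrable_sub_rpow hd a t).mul_continuousOn hg.continuousOn).const_mul
        ((x - t) ^ (c - 1))
    · simp [ht]
  · simp_rw [norm_indicator_eq_indicator_norm, integral_indicator_triangle_left,
      integrable_indicator_iff measurableSet_Ioc]
    -- the `t`-section of `‖F‖` integrates to `(x - t) ^ (c - 1) * Γ(d) * J^d |g| t`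
    have hnorm := (intervalIntegrable_sub_rpow hc a x).mul_continuousOn
      (uIcc_of_le hax ▸ (continuousOn_rlInt hd.le hg.abs).const_smul (Real.Gamma d))
    rw [intervalIntegrable_iff_integrableOn_Ioc_of_le hax] at hnorm
    refine hnorm.congr_fun (fun t ht => ?_) measurableSet_Ioc
    dsimp only
    rw [Pi.smul_apply, smul_eq_mul, rlInt_of_ne_zero hd.ne', ← mul_assoc (Real.Gamma d),
      mul_one_div_cancel (Real.Gamma_pos_of_pos hd).ne', one_mul,
      ← intervalIntegral.integral_const_mul]
    refine intervalIntegral.integral_congr fun s hs => ?_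
    rw [uIcc_of_le ht.1.le] at hs
    simp only [F, norm_mul, Real.norm_eq_abs,
      abs_of_nonneg (Real.rpow_nonneg (sub_nonneg.2 ht.2) _),
      abs_of_nonneg (Real.rpow_nonneg (sub_nonneg.2 hs.2) _)]

theorem rlInt_rlInt {a c d x : ℝ} (hc : 0 ≤ c) (hd : 0 ≤ d) {g : ℝ → ℝ}
    (hg : Continuous g) (hax : a ≤ x) : rlInt a c (rlInt a d g) x = rlInt a (c + d) g x := by
  rcases hc.eq_or_lt with rfl | hc
  · simp
  rcases hd.eq_or_lt with rfl | hd
  · simp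
  have hΓc := (Real.Gamma_pos_of_pos hc).ne'
  have hΓd := (Real.Gamma_pos_of_pos hd).ne'
  have hΓcd := (Real.Gamma_pos_of_pos (add_pos hc hd)).ne'
  have hkernel : ∀ᵐ s, s ∈ Ι a x →
      ∫ t in s..x, (x - t) ^ (c - 1) * ((t - s) ^ (d - 1) * g s) =
        Real.Gamma c * Real.Gamma d / Real.Gamma (c + d) * ((x - s) ^ (c + d - 1) * g s) := by
    filter_upwards [volume.ae_ne x] with s hsx hs
    rw [uIoc_of_le hax] at hs
    simp only [← mul_assoc, intervalIntegral.integral_mul_const,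
      integral_sub_rpow_mul_sub_rpow hc hd (lt_of_le_of_ne hs.2 hsx)]
  rw [rlInt_of_ne_zero hc.ne', rlInt_of_ne_zero (add_pos hc hd).ne']
  calc 1 / Real.Gamma c * ∫ t in a..x, (x - t) ^ (c - 1) * rlInt a d g t
      = 1 / Real.Gamma c * (1 / Real.Gamma d *
          ∫ t in a..x, ∫ s in a..t, (x - t) ^ (c - 1) * ((t - s) ^ (d - 1) * g s)) := by
        simp only [rlInt_of_ne_zero hd.ne', ← intervalIntegral.integral_const_mul]
        congr 1 with t
        ring_nf
    _ = 1 / Real.Gamma c * (1 / Real.Gamma d *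
          ∫ s in a..x, ∫ t in s..x, (x - t) ^ (c - 1) * ((t - s) ^ (d - 1) * g s)) := by
        rw [integral_triangle_eq_iterated hax (integrableOn_triangle_kernel hc hd hax hg)]
    _ = 1 / Real.Gamma (c + d) * ∫ s in a..x, (x - s) ^ (c + d - 1) * g s := by
        rw [intervalIntegral.integral_congr_ae hkernel, intervalIntegral.integral_const_mul]
        field_simp

lemma rlInt_add_one_eq_integral {a c x : ℝ} (hc : 0 ≤ c) {g : ℝ → ℝ} (hg : Continuous g)
    (hax : a ≤ x) : rlInt a (c + 1) g x = ∫ t in a..x, rlInt a c g t := by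
  rw [add_comm, ← rlInt_rlInt zero_le_one hc hg hax, rlInt_one]

lemma hasDerivWithinAt_rlInt_add_one {a b c x : ℝ} (hc : 0 ≤ c) {g : ℝ → ℝ}
    (hg : Continuous g) (hx : x ∈ Icc a b) :
    HasDerivWithinAt (rlInt a (c + 1) g) (rlInt a c g x) (Icc a b) x := by
  have hcont := continuousOn_rlInt (a := a) (b := b) hc hg
  have : Fact (x ∈ Icc a b) := ⟨hx⟩
  refine (intervalIntegral.integral_hasDerivWithinAt_right
    ((hcont.mono (Icc_subset_Icc_right hx.2)).intervalIntegrable_of_Icc hx.1)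
    (hcont.stronglyMeasurableAtFilter_nhdsWithin measurableSet_Icc x) (hcont x hx))
    |>.congr_of_mem (fun y hy => rlInt_add_one_eq_integral hc hg hy.1) hx

lemma iteratedDerivWithin_rlInt_add_nat {a b c : ℝ} (hab : a < b) (hc : 0 ≤ c) {g : ℝ → ℝ}
    (hg : Continuous g) (k : ℕ) :
    EqOn (iteratedDerivWithin k (rlInt a (c + k) g) (Icc a b)) (rlInt a c g) (Icc a b) := by
  induction k with
  | zero => simp [EqOn]
  | succ k ih =>
    have hderiv : EqOn (derivWithin (rlInt a (c + (k + 1 : ℕ)) g) (Icc a b))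
        (rlInt a (c + k) g) (Icc a b) := fun x hx => by
      rw [Nat.cast_succ, ← add_assoc]
      exact (hasDerivWithinAt_rlInt_add_one (by positivity) hg hx).derivWithin
        (uniqueDiffOn_Icc hab x hx)
    rw [iteratedDerivWithin_succ']
    exact fun x hx => (iteratedDerivWithin_congr hderiv hx).trans (ih hx)

lemma differentiableWithinAt_iteratedDerivWithin_rlInt {a b c x : ℝ} (hab : a < b)
    (hc : 0 ≤ c) {g : ℝ → ℝ} (hg : Continuous g) {j k : ℕ} (hjk : j < k) (hx : x ∈ Icc a b) :
    DifferentiableWithinAt ℝ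
      (iteratedDerivWithin j (rlInt a (c + k) g) (Icc a b)) (Icc a b) x := by
  obtain ⟨i, rfl⟩ := Nat.exists_eq_add_of_lt hjk
  have hci : 0 ≤ c + i := by positivity
  have hord : c + ((j + i + 1 : ℕ) : ℝ) = (c + i + 1) + j := by push_cast; ring
  have hEq := iteratedDerivWithin_rlInt_add_nat hab (by positivity) hg j (c := c + i + 1)
  rw [hord]
  exact (hasDerivWithinAt_rlInt_add_one hci hg hx).differentiableWithinAt.congr
    (fun y hy => hEq hy) (hEq hx)

theorem rl_derivative_of_eqOn_rlInt_add {a b n c : ℝ} (hab : a < b) (hn : 0 ≤ n) (hc : 0 ≤ c)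
    {g : ℝ → ℝ} (hg : Continuous g) {h : ℝ → ℝ} (hh : EqOn h (rlInt a (n + c) g) (Icc a b)) :
    (∀ k < ⌈n⌉₊, ∀ x ∈ Icc a b, DifferentiableWithinAt ℝ
      (iteratedDerivWithin k (rlInt a (⌈n⌉₊ - n) h) (Icc a b)) (Icc a b) x) ∧
    ∀ x ∈ Icc a b,
      iteratedDerivWithin ⌈n⌉₊ (rlInt a (⌈n⌉₊ - n) h) (Icc a b) x = rlInt a c g x := by
  have hEq : EqOn (rlInt a (⌈n⌉₊ - n) h) (rlInt a (c + ⌈n⌉₊) g) (Icc a b) := fun x hx => by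
    rw [rlInt_congr hh hx, rlInt_rlInt (sub_nonneg.2 (Nat.le_ceil n)) (by positivity) hg hx.1]
    ring_nf
  refine ⟨fun k hk x hx => ?_, fun x hx => ?_⟩
  · exact (differentiableWithinAt_iteratedDerivWithin_rlInt hab hc hg hk hx).congr
      (fun y hy => iteratedDerivWithin_congr hEq hy) (iteratedDerivWithin_congr hEq hx)
  · exact (iteratedDerivWithin_congr hEq hx).trans
      (iteratedDerivWithin_rlInt_add_nat hab hc hg _ hx)

theorem rl_derivative_of_eqOn_rlInt {a b n : ℝ} (hab : a < b) (hn : 0 ≤ n)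
    {g : ℝ → ℝ} (hg : Continuous g) {h : ℝ → ℝ} (hh : EqOn h (rlInt a n g) (Icc a b)) :
    (∀ k < ⌈n⌉₊, ∀ x ∈ Icc a b, DifferentiableWithinAt ℝ
      (iteratedDerivWithin k (rlInt a (⌈n⌉₊ - n) h) (Icc a b)) (Icc a b) x) ∧
    ∀ x ∈ Icc a b, iteratedDerivWithin ⌈n⌉₊ (rlInt a (⌈n⌉₊ - n) h) (Icc a b) x = g x := by
  simpa using rl_derivative_of_eqOn_rlInt_add hab hn le_rfl hg (c := 0) (by simpa using hh)

theorem rl_derivative_composition (a b n₁ n₂ : ℝ) (hab : a < b)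
    (hn₁ : 0 < n₁) (hn₂ : 0 < n₂)
    (g : ℝ → ℝ) (hg : ContinuousOn g (Icc a b))
    (f : ℝ → ℝ) (hf : f = rlInt a (n₁ + n₂) g) :
    (∀ k < ⌈n₂⌉₊, ∀ x ∈ Icc a b,
      DifferentiableWithinAt ℝ
        (iteratedDerivWithin k (rlInt a ((⌈n₂⌉₊ : ℝ) - n₂) f) (Icc a b)) (Icc a b) x) ∧
    (∀ x ∈ Icc a b,
      iteratedDerivWithin ⌈n₂⌉₊ (rlInt a ((⌈n₂⌉₊ : ℝ) - n₂) f) (Icc a b) x =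
        rlInt a n₁ g x) ∧
    (∀ k < ⌈n₁⌉₊, ∀ x ∈ Icc a b,
      DifferentiableWithinAt ℝ
        (iteratedDerivWithin k
          (rlInt a ((⌈n₁⌉₊ : ℝ) - n₁)
            (iteratedDerivWithin ⌈n₂⌉₊ (rlInt a ((⌈n₂⌉₊ : ℝ) - n₂) f) (Icc a b)))
          (Icc a b)) (Icc a b) x) ∧
    (∀ k < ⌈n₁ + n₂⌉₊, ∀ x ∈ Icc a b,
      DifferentiableWithinAt ℝ
        (iteratedDerivWithin k (rlInt a ((⌈n₁ + n₂⌉₊ : ℝ) - (n₁ + n₂)) f) (Icc a b))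
        (Icc a b) x) ∧
    ∀ x ∈ Icc a b,
      iteratedDerivWithin ⌈n₁⌉₊
        (rlInt a ((⌈n₁⌉₊ : ℝ) - n₁)
          (iteratedDerivWithin ⌈n₂⌉₊ (rlInt a ((⌈n₂⌉₊ : ℝ) - n₂) f) (Icc a b)))
        (Icc a b) x = g x ∧
      iteratedDerivWithin ⌈n₁ + n₂⌉₊ (rlInt a ((⌈n₁ + n₂⌉₊ : ℝ) - (n₁ + n₂)) f)
        (Icc a b) x = g x := by
  set gE := IccExtend hab.le ((Icc a b).domRestrict g)
  have hgE : Continuous gE := continuous_IccExtend_iff.2 hg.domRestrict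
  have hgEg : EqOn gE g (Icc a b) := fun x hx => IccExtend_of_mem _ _ hx
  have hfE : EqOn f (rlInt a (n₁ + n₂) gE) (Icc a b) := hf ▸ rlInt_congr hgEg.symm
  obtain ⟨hd₂, he₂⟩ := rl_derivative_of_eqOn_rlInt_add hab hn₂.le hn₁.le hgE (add_comm n₁ n₂ ▸ hfE)
  obtain ⟨hd₁, he₁⟩ := rl_derivative_of_eqOn_rlInt hab hn₁.le hgE he₂
  obtain ⟨hd₁₂, he₁₂⟩ := rl_derivative_of_eqOn_rlInt hab (add_pos hn₁ hn₂).le hgE hfE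
  exact ⟨hd₂, fun x hx => (he₂ x hx).trans (rlInt_congr hgEg hx), hd₁, hd₁₂,
    fun x hx => ⟨(he₁ x hx).trans (hgEg hx), (he₁₂ x hx).trans (hgEg hx)⟩⟩
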